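/- arXiv:2204.13305 — 2 statements merged into one kernel-verified Lean document; each statement's English description precedes it below -/
import Mathlib

section
/- Let F be a PCAF, C a set of claims, and i ∈ {2,3,4}. Then C ∈ adm_p^i(F) if and only if claim(E_*^i(C)) = C. Moreover, if C ∈ adm_p^i(F), then E_*^i(C) is the unique ⊆-maximal admissible set S in Red_i(F) with claim(S) = C: E_*^i(C) is admissible in Red_i(F), and every admissible set S in Red_i(F) with claim(S) = C satisfies S ⊆ E_*^i(C). -/
/-- A claim-augmented argumentation framework (CAF): a finite set of arguments,
an attack relation between the arguments, and a claim function assigning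
a claim to each argument.  Arguments and claims are drawn from `ℕ`. -/
structure CAF where
  args : Finset ℕ
  att : Set (ℕ × ℕ)
  claim : ℕ → ℕ
  att_dom : ∀ p ∈ att, p.1 ∈ args ∧ p.2 ∈ args

namespace CAF

/-- A CAF is well-formed if arguments with the same claim attack the same arguments. -/
def wf (F : CAF) : Prop :=
  ∀ a ∈ F.args, ∀ b ∈ F.args, F.claim a = F.claim b →
    ∀ c, ((a, c) ∈ F.att ↔ (b, c) ∈ F.att)

/-- `S` attacks the argument `b` in `F`. -/
def attacks (F : CAF) (S : Set ℕ) (b : ℕ) : Prop := ∃ a ∈ S, (a, b) ∈ F.att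

/-- The argument `a` is defended by `S` in `F`. -/
def defends (F : CAF) (S : Set ℕ) (a : ℕ) : Prop :=
  ∀ b, (b, a) ∈ F.att → F.attacks S b

/-- The range `S⊕` of `S` in `F`. -/
def range (F : CAF) (S : Set ℕ) : Set ℕ := S ∪ {b | F.attacks S b}

/-- Conflict-free sets. -/
def cf (F : CAF) (S : Set ℕ) : Prop :=
  S ⊆ ↑F.args ∧ ∀ a ∈ S, ∀ b ∈ S, (a, b) ∉ F.att

/-- Admissible sets. -/
def adm (F : CAF) (S : Set ℕ) : Prop :=
  F.cf S ∧ ∀ a ∈ S, F.defends S a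

/-- Complete extensions. -/
def com (F : CAF) (S : Set ℕ) : Prop :=
  F.adm S ∧ ∀ a ∈ F.args, F.defends S a → a ∈ S

/-- Naive extensions: ⊆-maximal conflict-free sets. -/
def naive (F : CAF) (S : Set ℕ) : Prop :=
  F.cf S ∧ ¬ ∃ T, F.cf T ∧ S ⊂ T

/-- Stable extensions. -/
def stb (F : CAF) (S : Set ℕ) : Prop :=
  F.cf S ∧ ∀ a ∈ F.args, a ∉ S → F.attacks S a

/-- Preferred extensions: ⊆-maximal admissible sets. -/
def prf (F : CAF) (S : Set ℕ) : Prop :=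
  F.adm S ∧ ¬ ∃ T, F.adm T ∧ S ⊂ T

/-- Semi-stable extensions: admissible sets with ⊆-maximal range among admissible sets. -/
def sem (F : CAF) (S : Set ℕ) : Prop :=
  F.adm S ∧ ¬ ∃ T, F.adm T ∧ F.range S ⊂ F.range T

/-- Stage extensions: conflict-free sets with ⊆-maximal range among conflict-free sets. -/
def stg (F : CAF) (S : Set ℕ) : Prop :=
  F.cf S ∧ ¬ ∃ T, F.cf T ∧ F.range S ⊂ F.range T

/-- The claim-based variant `σ_c` of a semantics `σ`. -/
def claimSem (σ : CAF → Set ℕ → Prop) (F : CAF) : Set (Set ℕ) :=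
  {C | ∃ S, σ F S ∧ F.claim '' S = C}

/-- The wf-problematic part of a CAF: the pairs of arguments `(a,b)` such that
`(a,b)` is not an attack but some argument `a'` with the same claim as `a` attacks `b`. -/
def wfp (F : CAF) : Set (ℕ × ℕ) :=
  {p | p.1 ∈ F.args ∧ p.2 ∈ F.args ∧ p ∉ F.att ∧
       ∃ a' ∈ F.args, F.claim a' = F.claim p.1 ∧ (a', p.2) ∈ F.att}

end CAF

/-- A preference-based CAF (PCAF): a well-formed CAF together with an
asymmetric preference relation over its arguments. -/
structure PCAF extends CAF where
  pref : ℕ → ℕ → Prop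
  pref_dom : ∀ a b, pref a b → a ∈ args ∧ b ∈ args
  pref_asymm : ∀ a b, pref a b → ¬ pref b a
  isWf : toCAF.wf

/-- The attack relation obtained from a PCAF by Reduction `i` (`i ∈ {1,2,3,4}`). -/
def redAtt (i : ℕ) (F : PCAF) : Set (ℕ × ℕ) :=
  if i = 1 then {p | p ∈ F.att ∧ ¬ F.pref p.2 p.1}
  else if i = 2 then
    {p | (p ∈ F.att ∧ ¬ F.pref p.2 p.1) ∨
         ((p.2, p.1) ∈ F.att ∧ p ∉ F.att ∧ F.pref p.1 p.2)}
  else if i = 3 then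
    {p | (p ∈ F.att ∧ ¬ F.pref p.2 p.1) ∨ (p ∈ F.att ∧ (p.2, p.1) ∉ F.att)}
  else if i = 4 then
    {p | (p ∈ F.att ∧ ¬ F.pref p.2 p.1) ∨
         ((p.2, p.1) ∈ F.att ∧ p ∉ F.att ∧ F.pref p.1 p.2) ∨
         (p ∈ F.att ∧ (p.2, p.1) ∉ F.att)}
  else ∅

/-- The CAF `Red_i(F)` obtained from the PCAF `F` by Reduction `i`. -/
def Red (i : ℕ) (F : PCAF) : CAF where
  args := F.args
  att := redAtt i F
  claim := F.claim
  att_dom := by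
    intro p hp
    unfold redAtt at hp
    split_ifs at hp
    · simp only [Set.mem_setOf_eq] at hp
      exact F.att_dom p hp.1
    · simp only [Set.mem_setOf_eq] at hp
      rcases hp with ⟨h, -⟩ | ⟨h, -, -⟩
      · exact F.att_dom p h
      · exact ⟨(F.att_dom _ h).2, (F.att_dom _ h).1⟩
    · simp only [Set.mem_setOf_eq] at hp
      rcases hp with ⟨h, -⟩ | ⟨h, -⟩ <;> exact F.att_dom p h
    · simp only [Set.mem_setOf_eq] at hp
      rcases hp with ⟨h, -⟩ | ⟨h, -, -⟩ | ⟨h, -⟩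
      · exact F.att_dom p h
      · exact ⟨(F.att_dom _ h).2, (F.att_dom _ h).1⟩
      · exact F.att_dom p h
    · exact absurd hp (Set.notMem_empty p)

/-- `Image_i`: the class of CAFs obtainable by applying Reduction `i` to a PCAF. -/
def ImageI (i : ℕ) : Set CAF := {F | ∃ G : PCAF, Red i G = F}

/-- `ImageTrans_i`: the class of CAFs obtainable by applying Reduction `i`
to a PCAF with a transitive preference relation. -/
def ImageTransI (i : ℕ) : Set CAF :=
  {F | ∃ G : PCAF, Transitive G.pref ∧ Red i G = F}

/-- The class of well-formed CAFs. -/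
def wfCAFs : Set CAF := {F | F.wf}

/-- The preference-claim-based variant `σ_p^i` of a semantics `σ`. -/
def prefSem (σ : CAF → Set ℕ → Prop) (i : ℕ) (F : PCAF) : Set (Set ℕ) :=
  CAF.claimSem σ (Red i F)

/-- `E_0(C)`: all arguments of `F` with a claim in `C`. -/
def E0 (F : PCAF) (C : Set ℕ) : Set ℕ := {a | a ∈ F.args ∧ F.claim a ∈ C}

/-- `E_1^i(C)`: the arguments of `E_0(C)` not attacked by `E_0(C)` in the
underlying AF of `F` (this set does not depend on `i`). -/
def E1 (F : PCAF) (C : Set ℕ) : Set ℕ :=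
  E0 F C \ {b | ∃ a ∈ E0 F C, (a, b) ∈ F.att}

/-- The sequence `E_k^i(C)`. -/
def Ek (F : PCAF) (i : ℕ) (C : Set ℕ) : ℕ → Set ℕ
  | 0 => E0 F C
  | 1 => E1 F C
  | (k + 2) => {x | x ∈ Ek F i C (k + 1) ∧ (Red i F).defends (Ek F i C (k + 1)) x}

/-- `E_*^i(C)`: the fixed point of the sequence `E_k^i(C)` (reached after at
most `|A|` steps, since the sequence is ⊆-decreasing from index 1 on). -/
def Estar (F : PCAF) (i : ℕ) (C : Set ℕ) : Set ℕ := Ek F i C (F.args.card + 2)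

/-!
Every set `S` admissible in `Red_i(F)` with `claim(S) = C` lies in `E_1(C)`: since `Red_i` keeps
every attack in one direction or the other, `S` is conflict-free in `F`, and by well-formedness an
attack on `S` from `E_0(C)` would be an attack from `S` itself. Each further step of the sequence
keeps exactly the arguments the current set defends, so by monotonicity of defence `S` survives
every step. The sequence is a decreasing chain of subsets of `A`, hence stabilises after at most
`|A|` steps; its limit is conflict-free (it lies in `E_1(C)`, which is conflict-free because
`Red_i` adds no attack between unrelated arguments) and defends itself, so it is admissible.
-/

open Function

namespace Set

variable {α : Type*} {g : Set α → Set α}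

theorem iterate_subset_of_deflationary (hg : ∀ X, g X ⊆ X) (X : Set α) (k : ℕ) :
    g^[k] X ⊆ X := by
  induction k with
  | zero => exact subset_rfl
  | succ k ih => exact (iterate_succ_apply' g k X ▸ hg _).trans ih

theorem exists_isFixedPt_iterate_of_deflationary (hg : ∀ X, g X ⊆ X) {X : Set α}
    (hX : X.Finite) : ∃ m ≤ X.ncard, IsFixedPt g (g^[m] X) := by
  induction h : X.ncard using Nat.strong_induction_on generalizing X with
  | _ n ih =>
    by_cases hfix : g X = X
    · exact ⟨0, Nat.zero_le _, hfix⟩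
    have hlt : (g X).ncard < n := h ▸ ncard_lt_ncard ((hg X).ssubset_of_ne hfix) hX
    obtain ⟨m, hm, hfixm⟩ := ih _ hlt (hX.subset (hg X)) rfl
    exact ⟨m + 1, by omega, by rwa [iterate_succ_apply]⟩

theorem isFixedPt_iterate_of_deflationary (hg : ∀ X, g X ⊆ X) {X : Set α} (hX : X.Finite)
    {n : ℕ} (hn : X.ncard ≤ n) : IsFixedPt g (g^[n] X) := by
  obtain ⟨m, hm, hfix⟩ := exists_isFixedPt_iterate_of_deflationary hg hX
  rw [show n = (n - m) + m by omega, iterate_add_apply, iterate_fixed hfix]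
  exact hfix

end Set

namespace CAF

variable {G : CAF} {S T X : Set ℕ}

/-- For `k ≥ 1`, `E_{k+1}^i(C)` is `(Red i F).defendedPart (E_k^i(C))`. -/
def defendedPart (G : CAF) (S : Set ℕ) : Set ℕ := {x | x ∈ S ∧ G.defends S x}

theorem defendedPart_subset (G : CAF) (S : Set ℕ) : G.defendedPart S ⊆ S := fun _ hx => hx.1

theorem cf.mono (h : G.cf T) (hST : S ⊆ T) : G.cf S :=
  ⟨hST.trans h.1, fun a ha b hb => h.2 a (hST ha) b (hST hb)⟩

theorem defends.mono {a : ℕ} (h : G.defends S a) (hST : S ⊆ T) : G.defends T a := by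
  intro b hb
  obtain ⟨c, hc, hcb⟩ := h b hb
  exact ⟨c, hST hc, hcb⟩

theorem adm.subset_defendedPart (hS : G.adm S) (hSX : S ⊆ X) : S ⊆ G.defendedPart X :=
  fun x hx => ⟨hSX hx, (hS.2 x hx).mono hSX⟩

theorem adm.subset_iterate_defendedPart (hS : G.adm S) (hSX : S ⊆ X) (k : ℕ) :
    S ⊆ G.defendedPart^[k] X := by
  induction k with
  | zero => exact hSX
  | succ k ih => exact iterate_succ_apply' G.defendedPart k X ▸ hS.subset_defendedPart ih

theorem adm_of_isFixedPt_defendedPart (hcf : G.cf S) (hfix : IsFixedPt G.defendedPart S) :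
    G.adm S :=
  ⟨hcf, fun a ha => (hfix.symm ▸ ha : a ∈ G.defendedPart S).2⟩

end CAF

namespace PCAF

variable (F : PCAF) {i : ℕ} (C : Set ℕ) {S : Set ℕ}

theorem mem_att_or_of_mem_redAtt (hi : i ∈ ({2, 3, 4} : Set ℕ)) {a b : ℕ}
    (h : (a, b) ∈ redAtt i F) : (a, b) ∈ F.att ∨ (b, a) ∈ F.att := by
  rcases hi with rfl | rfl | rfl <;> simp only [redAtt] at h <;> simp_all <;> tauto

theorem mem_redAtt_or_of_mem_att (hi : i ∈ ({2, 3, 4} : Set ℕ)) {a b : ℕ}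
    (h : (a, b) ∈ F.att) : (a, b) ∈ redAtt i F ∨ (b, a) ∈ redAtt i F := by
  have := F.pref_asymm a b
  rcases hi with rfl | rfl | rfl <;> simp only [redAtt] <;> simp_all <;>
    by_cases F.pref b a <;> tauto

theorem cf_Red_iff (hi : i ∈ ({2, 3, 4} : Set ℕ)) : (Red i F).cf S ↔ F.cf S := by
  refine and_congr Iff.rfl ⟨fun h a ha b hb hab => ?_, fun h a ha b hb hab => ?_⟩
  · rcases F.mem_redAtt_or_of_mem_att hi hab with hab | hba
    exacts [h a ha b hb hab, h b hb a ha hba]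
  · rcases F.mem_att_or_of_mem_redAtt hi hab with hab | hba
    exacts [h a ha b hb hab, h b hb a ha hba]

theorem E1_subset_args : E1 F C ⊆ F.args := fun _ hx => hx.1.1

theorem cf_E1 : F.cf (E1 F C) :=
  ⟨F.E1_subset_args C, fun a ha _ hb hab => hb.2 ⟨a, ha.1, hab⟩⟩

theorem subset_E1_of_cf (hS : F.cf S) (hC : F.claim '' S = C) : S ⊆ E1 F C := by
  intro x hx
  refine ⟨⟨hS.1 hx, hC ▸ Set.mem_image_of_mem _ hx⟩, ?_⟩
  rintro ⟨a, ⟨ha, haC⟩, hax⟩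
  obtain ⟨a', ha', hclaim⟩ : F.claim a ∈ F.claim '' S := hC ▸ haC
  exact hS.2 a' ha' x hx ((F.isWf a ha a' (hS.1 ha') hclaim.symm x).mp hax)

theorem Ek_succ_eq_iterate (k : ℕ) : Ek F i C (k + 1) = (Red i F).defendedPart^[k] (E1 F C) := by
  induction k with
  | zero => rfl
  | succ k ih => rw [iterate_succ_apply', ← ih]; rfl

theorem Estar_eq_iterate :
    Estar F i C = (Red i F).defendedPart^[F.args.card + 1] (E1 F C) :=
  F.Ek_succ_eq_iterate C _

theorem Estar_subset_E1 : Estar F i C ⊆ E1 F C := by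
  rw [Estar_eq_iterate]
  exact Set.iterate_subset_of_deflationary (CAF.defendedPart_subset _) _ _

theorem claim_Estar_subset : F.claim '' Estar F i C ⊆ C := by
  rintro _ ⟨x, hx, rfl⟩
  exact (F.Estar_subset_E1 C hx).1.2

theorem isFixedPt_Estar : IsFixedPt (Red i F).defendedPart (Estar F i C) := by
  have hfin : (E1 F C).Finite := F.args.finite_toSet.subset (F.E1_subset_args C)
  have hcard : (E1 F C).ncard ≤ F.args.card + 1 := by
    have := Set.ncard_le_ncard (F.E1_subset_args C)
    rw [Set.ncard_coe_finset] at this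
    omega
  rw [Estar_eq_iterate]
  exact Set.isFixedPt_iterate_of_deflationary (CAF.defendedPart_subset _) hfin hcard

theorem adm_Estar (hi : i ∈ ({2, 3, 4} : Set ℕ)) : (Red i F).adm (Estar F i C) :=
  CAF.adm_of_isFixedPt_defendedPart
    (((F.cf_Red_iff hi).mpr (F.cf_E1 C)).mono (F.Estar_subset_E1 C)) (F.isFixedPt_Estar C)

theorem subset_Estar (hi : i ∈ ({2, 3, 4} : Set ℕ)) (hS : (Red i F).adm S)
    (hC : F.claim '' S = C) : S ⊆ Estar F i C := by
  rw [Estar_eq_iterate]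
  exact hS.subset_iterate_defendedPart (F.subset_E1_of_cf C ((F.cf_Red_iff hi).mp hS.1) hC) _

end PCAF

/-- For `i ∈ {2,3,4}`: `C ∈ adm_p^i(F)` iff `claim(E_*^i(C)) = C`; moreover, if
`C ∈ adm_p^i(F)` then `E_*^i(C)` is the unique ⊆-maximal admissible set `S` of
`Red_i(F)` with `claim(S) = C`. -/
theorem stmt_14 (F : PCAF) (C : Set ℕ) :
    ∀ i ∈ ({2, 3, 4} : Set ℕ),
      (C ∈ prefSem CAF.adm i F ↔ F.claim '' Estar F i C = C) ∧
      (C ∈ prefSem CAF.adm i F →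
        (Red i F).adm (Estar F i C) ∧
        ∀ S : Set ℕ, (Red i F).adm S → F.claim '' S = C → S ⊆ Estar F i C) := by
  intro i hi
  refine ⟨⟨?_, fun h => ⟨Estar F i C, F.adm_Estar C hi, h⟩⟩,
    fun _ => ⟨F.adm_Estar C hi, fun S hS hC => F.subset_Estar C hi hS hC⟩⟩
  rintro ⟨S, hS, hC⟩
  exact (F.claim_Estar_subset C).antisymm
    (hC.symm.subset.trans (Set.image_mono (F.subset_Estar C hi hS hC)))
end

section
/- Let F be a PCAF, C a set of claims, and i ∈ {2,3,4}. Then C ∈ stb_p^i(F) if and only if claim(E_*^i(C)) = C and E_*^i(C) is a stable extension of Red_i(F). In particular, if claim(E_*^i(C)) = C but E_*^i(C) is not stable in Red_i(F), then no stable extension S of Red_i(F) satisfies claim(S) = C. -/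
/-!
A stable extension `S` of `Red_i(F)` with `claim(S) = C` is pinned down by `C`. For
`i ∈ {2,3,4}` every attack of `F` survives in `Red_i(F)` in one direction or the other, so
`S` is conflict-free in `F`; by well-formedness no argument with a claim in `C` attacks `S`,
i.e. `S ⊆ E_1(C)`. Being admissible, `S` survives every pruning step, so `S ⊆ E_*(C)`.
Conversely `E_*(C) ⊆ E_1(C)` is conflict-free, and a stable extension has no conflict-free
proper superset, hence `S = E_*(C)`.
-/

namespace CAF

variable {F : CAF} {S T : Set ℕ}

theorem cf.mono_s16 (hT : F.cf T) (hST : S ⊆ T) : F.cf S :=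
  ⟨hST.trans hT.1, fun a ha b hb => hT.2 a (hST ha) b (hST hb)⟩

theorem defends_mono (hST : S ⊆ T) {a : ℕ} (h : F.defends S a) : F.defends T a :=
  fun b hb => let ⟨x, hx, hxb⟩ := h b hb; ⟨x, hST hx, hxb⟩

theorem stb.adm (h : F.stb S) : F.adm S := by
  refine ⟨h.1, fun a ha b hba => h.2 b (F.att_dom _ hba).1 fun hb => ?_⟩
  exact h.1.2 b hb a ha hba

theorem stb.eq_of_subset_of_cf (h : F.stb S) (hST : S ⊆ T) (hT : F.cf T) : S = T := by
  refine hST.antisymm fun a ha => ?_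
  by_contra haS
  obtain ⟨x, hx, hxa⟩ := h.2 a (hT.1 ha) haS
  exact hT.2 x (hST hx) a ha hxa

end CAF

section Reduction

variable {i : ℕ} {F : PCAF}

theorem mem_att_or_of_mem_redAtt {a b : ℕ} (h : (a, b) ∈ redAtt i F) :
    (a, b) ∈ F.att ∨ (b, a) ∈ F.att := by
  unfold redAtt at h
  split_ifs at h <;> simp only [Set.mem_ofPred_eq, Set.mem_empty_iff_false] at h <;> tauto

theorem mem_redAtt_or_of_mem_att (hi : i ∈ ({2, 3, 4} : Set ℕ)) {a b : ℕ}
    (h : (a, b) ∈ F.att) : (a, b) ∈ redAtt i F ∨ (b, a) ∈ redAtt i F := by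
  have hasymm := F.pref_asymm a b
  simp only [Set.mem_insert_iff, Set.mem_singleton_iff] at hi
  rcases hi with rfl | rfl | rfl <;> simp [redAtt] <;> tauto

theorem cf_Red_iff (hi : i ∈ ({2, 3, 4} : Set ℕ)) {S : Set ℕ} :
    (Red i F).cf S ↔ F.cf S :=
  ⟨fun h => ⟨h.1, fun a ha b hb hab =>
      (mem_redAtt_or_of_mem_att hi hab).elim (h.2 a ha b hb) (h.2 b hb a ha)⟩,
    fun h => ⟨h.1, fun a ha b hb hab =>
      (mem_att_or_of_mem_redAtt hab).elim (h.2 a ha b hb) (h.2 b hb a ha)⟩⟩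

end Reduction

section Pruning

variable {F : PCAF} {C S : Set ℕ}

theorem cf_E1 : F.cf (E1 F C) :=
  ⟨fun _ ha => ha.1.1, fun a ha _ hb hab => hb.2 ⟨a, ha.1, hab⟩⟩

theorem Ek_succ_subset_E1 (i : ℕ) : ∀ k, Ek F i C (k + 1) ⊆ E1 F C
  | 0 => le_rfl
  | k + 1 => fun _ hx => Ek_succ_subset_E1 i k hx.1

-- Well-formedness transfers an attack from `x ∈ E_0(C)` to an argument of `S` with the same claim.
theorem subset_E1_of_cf (hS : F.cf S) (hSC : F.claim '' S = C) : S ⊆ E1 F C := by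
  refine fun a ha => ⟨⟨hS.1 ha, hSC ▸ Set.mem_image_of_mem _ ha⟩, ?_⟩
  rintro ⟨x, ⟨hx, hxC⟩, hxa⟩
  obtain ⟨y, hy, hyx⟩ := hSC ▸ hxC
  exact hS.2 y hy a ha ((F.isWf y (hS.1 hy) x hx hyx a).mpr hxa)

theorem subset_Ek_of_adm {i : ℕ} (hS : (Red i F).adm S) (hS1 : S ⊆ E1 F C) :
    ∀ k, S ⊆ Ek F i C (k + 1)
  | 0 => hS1
  | k + 1 => fun a ha =>
    ⟨subset_Ek_of_adm hS hS1 k ha, CAF.defends_mono (subset_Ek_of_adm hS hS1 k) (hS.2 a ha)⟩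

theorem cf_Estar {i : ℕ} (hi : i ∈ ({2, 3, 4} : Set ℕ)) : (Red i F).cf (Estar F i C) :=
  (cf_Red_iff hi).2 (cf_E1.mono_s16 (Ek_succ_subset_E1 i _))

theorem eq_Estar_of_stb {i : ℕ} (hi : i ∈ ({2, 3, 4} : Set ℕ)) (hS : (Red i F).stb S)
    (hSC : F.claim '' S = C) : S = Estar F i C :=
  hS.eq_of_subset_of_cf
    (subset_Ek_of_adm hS.adm (subset_E1_of_cf ((cf_Red_iff hi).1 hS.1) hSC) _) (cf_Estar hi)

end Pruning

/-- For `i ∈ {2,3,4}`: `C ∈ stb_p^i(F)` iff `claim(E_*^i(C)) = C` and `E_*^i(C)`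
is a stable extension of `Red_i(F)`.  In particular, if `claim(E_*^i(C)) = C` but
`E_*^i(C)` is not stable in `Red_i(F)`, then no stable extension `S` of
`Red_i(F)` satisfies `claim(S) = C`. -/
theorem stmt_16 (F : PCAF) (C : Set ℕ) :
    ∀ i ∈ ({2, 3, 4} : Set ℕ),
      (C ∈ prefSem CAF.stb i F ↔
        (F.claim '' Estar F i C = C ∧ (Red i F).stb (Estar F i C))) ∧
      ((F.claim '' Estar F i C = C ∧ ¬ (Red i F).stb (Estar F i C)) →
        ∀ S : Set ℕ, (Red i F).stb S → F.claim '' S ≠ C) := by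
  intro i hi
  have hiff : C ∈ prefSem CAF.stb i F ↔
      (F.claim '' Estar F i C = C ∧ (Red i F).stb (Estar F i C)) :=
    ⟨fun ⟨S, hS, hSC⟩ => eq_Estar_of_stb hi hS hSC ▸ ⟨hSC, hS⟩, fun h => ⟨_, h.2, h.1⟩⟩
  exact ⟨hiff, fun ⟨_, hns⟩ S hS hSC => hns (hiff.1 ⟨S, hS, hSC⟩).2⟩
end
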